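/- In U_{v,t}, for every homogeneous x ∈ f and every i ∈ I, the commutator identity x⁺F_i − F_ix⁺ = (r_i⁺(x⁺)K_i − K'_i(_ir⁺(x⁺)))/(v_i − v_i^{−1}) holds. -/

import Mathlib

/-!
Both sides are linear in `x`, so it suffices to treat monomials, by induction on the word. For
`x = θ_j y` the commutator obeys the Leibniz rule `[E_j y⁺, F_i] = E_j [y⁺, F_i] + [E_j, F_i] y⁺`;
the first term is known by induction and the second is given by (R3). Comparing with the twisted
Leibniz rules for `r_i` and `_ir`, what remains is to move `K_i` past `y⁺` and `E_j` past `K'_i`,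
and by (R2) this produces exactly the twists `v^{i·|y|} t^{⟨|y|,i⟩-⟨i,|y|⟩}` and
`v^{i·j} t^{⟨i,j⟩-⟨j,i⟩}` occurring in those rules.
-/

noncomputable section

def wdeg {I : Type*} [DecidableEq I] (w : FreeMonoid I) : I →₀ ℕ :=
  (w.toList.map fun i => Finsupp.single i 1).sum

def angN {I : Type*} (form : I → I → ℤ) (ν μ : I →₀ ℕ) : ℤ :=
  ν.sum fun i a => μ.sum fun j b => (a : ℤ) * (b : ℤ) * form i j

def dotN {I : Type*} (form : I → I → ℤ) (ν μ : I →₀ ℕ) : ℤ :=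
  angN form ν μ + angN form μ ν

abbrev FreeAlg (K : Type*) [Field K] (I : Type*) : Type _ :=
  MonoidAlgebra K (FreeMonoid I)

def theta {K : Type*} [Field K] {I : Type*} (i : I) : FreeAlg K I :=
  MonoidAlgebra.of K (FreeMonoid I) (FreeMonoid.of i)

def IsHomog {K : Type*} [Field K] {I : Type*} [DecidableEq I]
    (x : FreeAlg K I) (ν : I →₀ ℕ) : Prop :=
  ∀ w ∈ x.coeff.support, wdeg w = ν

section Weights

variable {I : Type*}

theorem angN_zero_left (form : I → I → ℤ) (ν : I →₀ ℕ) : angN form 0 ν = 0 := by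
  simp [angN]

theorem angN_zero_right (form : I → I → ℤ) (ν : I →₀ ℕ) : angN form ν 0 = 0 := by
  simp [angN]

theorem angN_add_left (form : I → I → ℤ) (μ₁ μ₂ ν : I →₀ ℕ) :
    angN form (μ₁ + μ₂) ν = angN form μ₁ ν + angN form μ₂ ν := by
  unfold angN
  rw [Finsupp.sum_add_index']
  · simp
  · intro i a b
    rw [← Finsupp.sum_add]
    exact Finsupp.sum_congr fun j _ => by push_cast; ring

theorem angN_add_right (form : I → I → ℤ) (ν μ₁ μ₂ : I →₀ ℕ) :
    angN form ν (μ₁ + μ₂) = angN form ν μ₁ + angN form ν μ₂ := by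
  unfold angN
  rw [← Finsupp.sum_add]
  refine Finsupp.sum_congr fun i _ => ?_
  rw [Finsupp.sum_add_index'] <;> intros <;> push_cast <;> ring

theorem dotN_zero_right (form : I → I → ℤ) (ν : I →₀ ℕ) : dotN form ν 0 = 0 := by
  simp [dotN, angN_zero_left, angN_zero_right]

theorem dotN_add_right (form : I → I → ℤ) (ν μ₁ μ₂ : I →₀ ℕ) :
    dotN form ν (μ₁ + μ₂) = dotN form ν μ₁ + dotN form ν μ₂ := by
  simp only [dotN, angN_add_left, angN_add_right]
  ring

def twist {G : Type*} [Group G] (v t : G) (form : I → I → ℤ) (ν μ : I →₀ ℕ) : G :=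
  v ^ dotN form ν μ * t ^ (angN form μ ν - angN form ν μ)

theorem twist_zero_right {G : Type*} [Group G] (v t : G) (form : I → I → ℤ) (ν : I →₀ ℕ) :
    twist v t form ν 0 = 1 := by
  simp [twist, dotN_zero_right, angN_zero_left, angN_zero_right]

theorem twist_add_right {G : Type*} [CommGroup G] (v t : G) (form : I → I → ℤ) (ν μ₁ μ₂ : I →₀ ℕ) :
    twist v t form ν (μ₁ + μ₂) = twist v t form ν μ₁ * twist v t form ν μ₂ := by
  have hexp : angN form (μ₁ + μ₂) ν - angN form ν (μ₁ + μ₂) =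
      (angN form μ₁ ν - angN form ν μ₁) + (angN form μ₂ ν - angN form ν μ₂) := by
    rw [angN_add_left, angN_add_right]; ring
  rw [twist, twist, twist, dotN_add_right, hexp, zpow_add, zpow_add, mul_mul_mul_comm]

theorem of_of_eq_theta (K : Type*) [Field K] (i : I) :
    MonoidAlgebra.of K (FreeMonoid I) (FreeMonoid.of i) = theta i :=
  rfl

variable [DecidableEq I]

@[simp]
theorem wdeg_one : wdeg (1 : FreeMonoid I) = 0 := by
  simp [wdeg]

@[simp]
theorem wdeg_of (i : I) : wdeg (FreeMonoid.of i) = Finsupp.single i 1 := by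
  simp [wdeg]

@[simp]
theorem wdeg_mul (w₁ w₂ : FreeMonoid I) : wdeg (w₁ * w₂) = wdeg w₁ + wdeg w₂ := by
  simp [wdeg]

theorem isHomog_of (K : Type*) [Field K] (w : FreeMonoid I) :
    IsHomog (MonoidAlgebra.of K (FreeMonoid I) w) (wdeg w) := by
  intro u hu
  rw [MonoidAlgebra.of_apply, MonoidAlgebra.coeff_single, Finsupp.mem_support_single] at hu
  rw [hu.1]

theorem isHomog_theta (K : Type*) [Field K] (i : I) :
    IsHomog (theta (K := K) i) (Finsupp.single i 1) :=
  wdeg_of i ▸ isHomog_of K (FreeMonoid.of i)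

end Weights

section Commutators

variable {K : Type*} [Field K] {U : Type*} [Ring U] [Algebra K U] {f k k' : U} {c : K}

theorem mul_eq_smul_swap {a b : U} {u : Kˣ} {q : K} (h : a * b = (u : K) • (b * a))
    (hq : q * u = 1) : b * a = q • (a * b) := by
  rw [h, smul_smul, hq, one_smul]

theorem mul_map_of_eq_smul_of_forall_theta {I : Type*} [DecidableEq I] (φ : FreeAlg K I →ₐ[K] U)
    {q : (I →₀ ℕ) → K} (hq_zero : q 0 = 1) (hq_add : ∀ μ ν, q (μ + ν) = q μ * q ν)
    (hk : ∀ j, k * φ (theta j) = q (Finsupp.single j 1) • (φ (theta j) * k))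
    (w : FreeMonoid I) :
    k * φ (MonoidAlgebra.of K _ w) = q (wdeg w) • (φ (MonoidAlgebra.of K _ w) * k) := by
  induction w using FreeMonoid.inductionOn' with
  | one => rw [map_one, map_one, wdeg_one, hq_zero, one_smul, one_mul, mul_one]
  | of_mul j w ih =>
    rw [map_mul, of_of_eq_theta, map_mul, ← mul_assoc, hk j, smul_mul_assoc, mul_assoc, ih,
      mul_smul_comm, smul_smul, wdeg_mul, wdeg_of, hq_add, mul_assoc]

theorem commutator_eq_of_forall_of {I : Type*} {φ : FreeAlg K I →ₐ[K] U}
    {R L : FreeAlg K I →ₗ[K] FreeAlg K I}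
    (h : ∀ w, φ (MonoidAlgebra.of K _ w) * f - f * φ (MonoidAlgebra.of K _ w) =
      c • (φ (R (MonoidAlgebra.of K _ w)) * k - k' * φ (L (MonoidAlgebra.of K _ w))))
    (x : FreeAlg K I) : φ x * f - f * φ x = c • (φ (R x) * k - k' * φ (L x)) := by
  induction x using MonoidAlgebra.induction_on with
  | of w => exact h w
  | add x y hx hy =>
    calc φ (x + y) * f - f * φ (x + y) = (φ x * f - f * φ x) + (φ y * f - f * φ y) := by
          rw [map_add, add_mul, mul_add]; abel
      _ = _ := by
          rw [hx, hy, ← smul_add, map_add, map_add, map_add, map_add, add_mul, mul_add]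
          congr 1; abel
  | smul r x hx =>
    simp only [map_smul, smul_mul_assoc, mul_smul_comm, ← smul_sub, hx, smul_comm r c]

variable {A : Type*} [Semiring A] [Algebra K A] {φ : A →ₐ[K] U} {R L : A →ₗ[K] A}

theorem commutator_mul_of_commutator {q q' : K} {a y : A} (P : Prop) [Decidable P]
    (hy : φ y * f - f * φ y = c • (φ (R y) * k - k' * φ (L y)))
    (ha : φ a * f - f * φ a = if P then c • (k - k') else 0)
    (hRa : R a = if P then 1 else 0) (hLa : L a = if P then 1 else 0)
    (hR : R (a * y) = q • (R a * y) + a * R y) (hL : L (a * y) = L a * y + q' • (a * L y))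
    (hk : k * φ y = q • (φ y * k)) (hk' : φ a * k' = q' • (k' * φ a)) :
    φ (a * y) * f - f * φ (a * y) = c • (φ (R (a * y)) * k - k' * φ (L (a * y))) := by
  have leibniz : φ (a * y) * f - f * φ (a * y) =
      φ a * (φ y * f - f * φ y) + (φ a * f - f * φ a) * φ y := by
    rw [map_mul]; noncomm_ring
  rw [leibniz, hy, ha, hR, hL, hRa, hLa]
  split_ifs
  · simp only [map_add, map_smul, map_mul, one_mul, mul_sub, sub_mul, add_mul, mul_add,
      smul_sub, mul_smul_comm, smul_mul_assoc, ← mul_assoc, hk, hk']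
    module
  · simp only [map_smul, map_mul, zero_mul, zero_add, smul_zero, add_zero,
      mul_sub, mul_smul_comm, smul_mul_assoc, ← mul_assoc, hk']

end Commutators

theorem commutator_with_F_general {I : Type*} [DecidableEq I] {K : Type*} [Field K]
    (v t : Kˣ) (form : I → I → ℤ)
    (dh : I → ℤ)
    {U : Type*} [Ring U] [Algebra K U]
    (E Fg : I → U) (Kk Kk' : I → Uˣ)
    -- the relations (R2) of U_{v,t}
    (hKE : ∀ i j, (Kk i : U) * E j =
      ((v ^ dotN form (Finsupp.single i 1) (Finsupp.single j 1) *
        t ^ (angN form (Finsupp.single j 1) (Finsupp.single i 1) -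
             angN form (Finsupp.single i 1) (Finsupp.single j 1)) : Kˣ) : K) • (E j * (Kk i : U)))
    (hK'E : ∀ i j, (Kk' i : U) * E j =
      ((v ^ (-(dotN form (Finsupp.single i 1) (Finsupp.single j 1))) *
        t ^ (angN form (Finsupp.single j 1) (Finsupp.single i 1) -
             angN form (Finsupp.single i 1) (Finsupp.single j 1)) : Kˣ) : K) • (E j * (Kk' i : U)))
    -- the relation (R3) of U_{v,t}
    (hEF : ∀ i j, E i * Fg j - Fg j * E i =
      if i = j then
        (((v ^ dh i : Kˣ) : K) - ((v ^ dh i : Kˣ) : K)⁻¹)⁻¹ • (((Kk i : U)) - ((Kk' i : U)))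
      else 0)
    (plus : FreeAlg K I →ₐ[K] U)
    (hplusθ : ∀ i, plus (theta i) = E i)
    -- the twisted derivations r_i (= R) and _ir (= L) on f
    (R L : I → FreeAlg K I →ₗ[K] FreeAlg K I)
    (hR1 : ∀ i, R i 1 = 0)
    (hRθ : ∀ i j, R i (theta j) = if i = j then 1 else 0)
    (hRmul : ∀ (i : I) (x y : FreeAlg K I) (ν μ : I →₀ ℕ), IsHomog x ν → IsHomog y μ →
      R i (x * y) =
        ((v ^ dotN form (Finsupp.single i 1) μ *
          t ^ (angN form μ (Finsupp.single i 1) - angN form (Finsupp.single i 1) μ) : Kˣ) : K) •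
          (R i x * y) + x * R i y)
    (hL1 : ∀ i, L i 1 = 0)
    (hLθ : ∀ i j, L i (theta j) = if i = j then 1 else 0)
    (hLmul : ∀ (i : I) (x y : FreeAlg K I) (ν μ : I →₀ ℕ), IsHomog x ν → IsHomog y μ →
      L i (x * y) =
        L i x * y +
        ((v ^ dotN form (Finsupp.single i 1) ν *
          t ^ (angN form (Finsupp.single i 1) ν - angN form ν (Finsupp.single i 1)) : Kˣ) : K) •
          (x * L i y)) :
    ∀ (x : FreeAlg K I) (ν : I →₀ ℕ), IsHomog x ν → ∀ i : I,
      plus x * Fg i - Fg i * plus x =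
        (((v ^ dh i : Kˣ) : K) - ((v ^ dh i : Kˣ) : K)⁻¹)⁻¹ •
          (plus (R i x) * (Kk i : U) - (Kk' i : U) * plus (L i x)) := by
  intro x _ _ i
  refine commutator_eq_of_forall_of (φ := plus) (fun w => ?_) x
  induction w using FreeMonoid.inductionOn' with
  | one =>
    simp only [map_one, one_mul, mul_one, sub_self, hR1, hL1, map_zero, zero_mul, mul_zero,
      smul_zero]
  | of_mul j w ih =>
    have hKw := mul_map_of_eq_smul_of_forall_theta plus
      (q := fun μ => ((twist v t form (Finsupp.single i 1) μ : Kˣ) : K))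
      (by rw [twist_zero_right, Units.val_one])
      (fun μ ν => by rw [twist_add_right, Units.val_mul])
      (fun l => by rw [hplusθ]; exact hKE i l) w
    rw [map_mul, of_of_eq_theta]
    have hEj : plus (theta j) * Fg i - Fg i * plus (theta j) = if i = j then
        (((v ^ dh i : Kˣ) : K) - ((v ^ dh i : Kˣ) : K)⁻¹)⁻¹ • ((Kk i : U) - Kk' i) else 0 := by
      rw [hplusθ, hEF j i]
      rcases eq_or_ne j i with rfl | h
      exacts [rfl, by simp [h, h.symm]]
    refine commutator_mul_of_commutator (i = j) ih hEj
      (hRθ i j) (hLθ i j) (hRmul i _ _ _ _ (isHomog_theta K j) (isHomog_of K w))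
      (hLmul i _ _ _ _ (isHomog_theta K j) (isHomog_of K w)) hKw ?_
    rw [hplusθ]
    refine mul_eq_smul_swap (hK'E i j) ?_
    rw [← Units.val_mul, mul_mul_mul_comm, ← zpow_add, ← zpow_add]
    simp

/-- in `U_{v,t}`, for homogeneous `x ∈ f` and `i ∈ I`,
`x⁺F_i − F_ix⁺ = (r_i⁺(x⁺)K_i − K'_i(_ir⁺(x⁺)))/(v_i − v_i^{−1})`. -/
theorem commutator_with_F {I : Type*} [Fintype I] [DecidableEq I] {K : Type*} [Field K]
    (v t : Kˣ) (form : I → I → ℤ)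
    (dh : I → ℤ) (hdh : ∀ i, 2 * dh i = dotN form (Finsupp.single i 1) (Finsupp.single i 1))
    {U : Type*} [Ring U] [Algebra K U]
    (E Fg : I → U) (Kk Kk' : I → Uˣ)
    -- the relations (R2) of U_{v,t}
    (hKE : ∀ i j, (Kk i : U) * E j =
      ((v ^ dotN form (Finsupp.single i 1) (Finsupp.single j 1) *
        t ^ (angN form (Finsupp.single j 1) (Finsupp.single i 1) -
             angN form (Finsupp.single i 1) (Finsupp.single j 1)) : Kˣ) : K) • (E j * (Kk i : U)))
    (hK'E : ∀ i j, (Kk' i : U) * E j =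
      ((v ^ (-(dotN form (Finsupp.single i 1) (Finsupp.single j 1))) *
        t ^ (angN form (Finsupp.single j 1) (Finsupp.single i 1) -
             angN form (Finsupp.single i 1) (Finsupp.single j 1)) : Kˣ) : K) • (E j * (Kk' i : U)))
    (hK'F : ∀ i j, (Kk' i : U) * Fg j =
      ((v ^ dotN form (Finsupp.single i 1) (Finsupp.single j 1) *
        t ^ (angN form (Finsupp.single i 1) (Finsupp.single j 1) -
             angN form (Finsupp.single j 1) (Finsupp.single i 1)) : Kˣ) : K) • (Fg j * (Kk' i : U)))
    (hKF : ∀ i j, (Kk i : U) * Fg j =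
      ((v ^ (-(dotN form (Finsupp.single i 1) (Finsupp.single j 1))) *
        t ^ (angN form (Finsupp.single i 1) (Finsupp.single j 1) -
             angN form (Finsupp.single j 1) (Finsupp.single i 1)) : Kˣ) : K) • (Fg j * (Kk i : U)))
    -- the relation (R3) of U_{v,t}
    (hEF : ∀ i j, E i * Fg j - Fg j * E i =
      if i = j then
        (((v ^ dh i : Kˣ) : K) - ((v ^ dh i : Kˣ) : K)⁻¹)⁻¹ • (((Kk i : U)) - ((Kk' i : U)))
      else 0)
    (plus : FreeAlg K I →ₐ[K] U)
    (hplusθ : ∀ i, plus (theta i) = E i)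
    -- the twisted derivations r_i (= R) and _ir (= L) on f
    (R L : I → FreeAlg K I →ₗ[K] FreeAlg K I)
    (hR1 : ∀ i, R i 1 = 0)
    (hRθ : ∀ i j, R i (theta j) = if i = j then 1 else 0)
    (hRmul : ∀ (i : I) (x y : FreeAlg K I) (ν μ : I →₀ ℕ), IsHomog x ν → IsHomog y μ →
      R i (x * y) =
        ((v ^ dotN form (Finsupp.single i 1) μ *
          t ^ (angN form μ (Finsupp.single i 1) - angN form (Finsupp.single i 1) μ) : Kˣ) : K) •
          (R i x * y) + x * R i y)
    (hL1 : ∀ i, L i 1 = 0)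
    (hLθ : ∀ i j, L i (theta j) = if i = j then 1 else 0)
    (hLmul : ∀ (i : I) (x y : FreeAlg K I) (ν μ : I →₀ ℕ), IsHomog x ν → IsHomog y μ →
      L i (x * y) =
        L i x * y +
        ((v ^ dotN form (Finsupp.single i 1) ν *
          t ^ (angN form (Finsupp.single i 1) ν - angN form ν (Finsupp.single i 1)) : Kˣ) : K) •
          (x * L i y)) :
    ∀ (x : FreeAlg K I) (ν : I →₀ ℕ), IsHomog x ν → ∀ i : I,
      plus x * Fg i - Fg i * plus x =
        (((v ^ dh i : Kˣ) : K) - ((v ^ dh i : Kˣ) : K)⁻¹)⁻¹ •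
          (plus (R i x) * (Kk i : U) - (Kk' i : U) * plus (L i x)) :=
  commutator_with_F_general v t form dh E Fg Kk Kk' hKE hK'E hEF plus hplusθ R L hR1 hRθ hRmul hL1
    hLθ hLmul

end
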